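/- Let [n] = R ∪ S ∪ T be a partition with S nonempty and suppose H̃_p(Δ_R^{S,T}) ≠ 0. Then for any S' ⊆ S there exist R' ⊇ R and T' ⊇ T such that H̃_{p'}(Δ_{R'}^{S',T'}) ≠ 0, where p' - p = |R'\R|. -/

import Mathlib

open Finset

namespace SCx

variable (k : Type) [Field k] {n : ℕ}

/-- An (abstract) simplicial complex on the vertex set `Fin n`:
a set of finsets closed under taking subsets. -/
def IsComplex (Δ : Set (Finset (Fin n))) : Prop :=
  ∀ F ∈ Δ, ∀ G ⊆ F, G ∈ Δ

/-- Simplicial `p`-chains with coefficients in `k`: functions on the faces of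
cardinality `p+1`. -/
abbrev Chains (Δ : Set (Finset (Fin n))) (p : ℤ) : Type :=
  {F : Finset (Fin n) // F ∈ Δ ∧ (F.card : ℤ) = p + 1} → k

open Classical in
/-- The underlying function of the simplicial boundary map, written via its
transpose formula:
`(∂ f) G = ∑_{x : insert x G ∈ Δ} (-1)^{pos of x in insert x G} f (insert x G)`. -/
noncomputable def boundaryFun (Δ : Set (Finset (Fin n))) (p : ℤ)
    (f : Chains k Δ p) : Chains k Δ (p - 1) := fun G => ∑ x : Fin n,
  if h : x ∉ G.1 ∧ insert x G.1 ∈ Δ then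
    (-1 : k) ^ (G.1.filter (fun y => y < x)).card *
      f ⟨insert x G.1, h.2, by
        have hc := G.2.2
        rw [Finset.card_insert_of_notMem h.1]
        push_cast at hc ⊢
        omega⟩
  else 0

/-- The simplicial boundary map. -/
noncomputable def boundary (Δ : Set (Finset (Fin n))) (p : ℤ) :
    Chains k Δ p →ₗ[k] Chains k Δ (p - 1) where
  toFun := boundaryFun k Δ p
  map_add' f g := by
    funext G
    unfold boundaryFun
    rw [Pi.add_apply]
    rw [← Finset.sum_add_distrib]
    refine Finset.sum_congr rfl fun x _ => ?_
    split_ifs with h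
    · rw [Pi.add_apply]; ring
    · rw [add_zero]
  map_smul' c f := by
    funext G
    unfold boundaryFun
    simp only [RingHom.id_apply, Pi.smul_apply, smul_eq_mul, Finset.mul_sum]
    refine Finset.sum_congr rfl fun x _ => ?_
    split_ifs with h
    · ring
    · rw [mul_zero]

/-- Transport of chains along an equality of degrees. -/
noncomputable def chainsCongr (Δ : Set (Finset (Fin n))) {p q : ℤ} (h : p = q) :
    Chains k Δ p ≃ₗ[k] Chains k Δ q := by
  subst h; exact LinearEquiv.refl k _

noncomputable def cycles (Δ : Set (Finset (Fin n))) (p : ℤ) : Submodule k (Chains k Δ p) :=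
  LinearMap.ker (boundary k Δ p)

noncomputable def boundaries (Δ : Set (Finset (Fin n))) (p : ℤ) : Submodule k (Chains k Δ p) :=
  LinearMap.range ((chainsCongr k Δ (show p + 1 - 1 = p by ring)).toLinearMap ∘ₗ
    boundary k Δ (p + 1))

/-- Reduced simplicial homology of `Δ` in degree `p`, with coefficients in the field `k`,
defined as cycles modulo (boundaries intersected with cycles).  With this convention
`H̃_{-1}({∅}) = k`. -/
abbrev ReducedHomology (Δ : Set (Finset (Fin n))) (p : ℤ) :=
  ↥(cycles k Δ p) ⧸ (Submodule.comap (cycles k Δ p).subtype (boundaries k Δ p))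

/-- The Alexander dual of `Δ`. -/
def dual (Δ : Set (Finset (Fin n))) : Set (Finset (Fin n)) := {F | Fᶜ ∉ Δ}

/-- The restriction `Δ_R` of `Δ` to a vertex subset `R`. -/
def restrict (Δ : Set (Finset (Fin n))) (R : Finset (Fin n)) : Set (Finset (Fin n)) :=
  {F | F ∈ Δ ∧ F ⊆ R}

/-- The link `lk_Δ S`. -/
def link (Δ : Set (Finset (Fin n))) (S : Finset (Fin n)) : Set (Finset (Fin n)) :=
  {F | Disjoint F S ∧ F ∪ S ∈ Δ}

/-- `Δ_R^{S,T} = {F ⊆ R : F ∪ S ∈ Δ}` (for `T` the complement of `R ∪ S`). -/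
def sub (Δ : Set (Finset (Fin n))) (R S : Finset (Fin n)) : Set (Finset (Fin n)) :=
  {F | F ⊆ R ∧ F ∪ S ∈ Δ}

/-- `Δ` has dimension `d - 1`, i.e. `d` is the maximal cardinality of a face. -/
def IsDim (Δ : Set (Finset (Fin n))) (d : ℕ) : Prop :=
  (∀ F ∈ Δ, F.card ≤ d) ∧ ∃ F ∈ Δ, F.card = d

/-- `Δ` has frame dimension `c - 1`, i.e. `c` is the largest integer such that
every `c`-subset of `[n]` is a face of `Δ`. -/
def IsFrame (Δ : Set (Finset (Fin n))) (c : ℕ) : Prop :=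
  (∀ F : Finset (Fin n), F.card ≤ c → F ∈ Δ) ∧
    ∃ F : Finset (Fin n), F.card = c + 1 ∧ F ∉ Δ

/-- A facet: a maximal face. -/
def IsFacet (Δ : Set (Finset (Fin n))) (F : Finset (Fin n)) : Prop :=
  F ∈ Δ ∧ ∀ G ∈ Δ, F ⊆ G → F = G

/-!
Put `E = Δ_{R ∪ v}^{S₀}`. Its faces avoiding `v` form the deletion `Δ_R^{S₀}`, and its faces
through `v` form the cone `v * Γ` over the link `Γ = Δ_R^{S₀ ∪ v}`. Let `z` be a `p`-cycle of
`Γ` that is not a boundary. Either `z` is still not a boundary in the deletion, or `z = ∂w`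
there; then `v * z - w` is a `(p+1)`-cycle of `E`, and it is not a boundary, because
contracting a relation `v * z - w = ∂c` with `v` would give `z = ∂(-ι_v c)` in `Γ`. Hence each
vertex of `S \ S'` can be moved into `T` at no cost or into `R` at the cost of one degree.

Chains are handled as functions on all finsets that vanish off the faces of the right size,
so that the boundary, cone and contraction need no degree bookkeeping.
-/

section FinsetBoundary

variable {K : Type*} [CommRing K]

variable (K) in
def insertSign (x : Fin n) (G : Finset (Fin n)) : K :=
  (-1) ^ (G.filter (· < x)).card

lemma insertSign_mul_self (x : Fin n) (G : Finset (Fin n)) :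
    insertSign K x G * insertSign K x G = 1 := by
  rw [insertSign, ← pow_add]
  exact Even.neg_one_pow ⟨_, rfl⟩

lemma insertSign_insert_mul {x v : Fin n} {F : Finset (Fin n)} (hxv : x ≠ v) (hvF : v ∉ F)
    (hxF : x ∉ F) : insertSign K x (insert v F) * insertSign K v F =
      -(insertSign K x F * insertSign K v (insert x F)) := by
  unfold insertSign
  rcases lt_or_gt_of_ne hxv with hlt | hlt
  · rw [filter_insert, if_neg (not_lt.mpr hlt.le), filter_insert, if_pos hlt,
      card_insert_of_notMem (by simp [hxF]), pow_succ]
    ring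
  · rw [filter_insert, if_pos hlt, filter_insert, if_neg (not_lt.mpr hlt.le),
      card_insert_of_notMem (by simp [hvF]), pow_succ]
    ring

def finsetBoundary (f : Finset (Fin n) → K) (G : Finset (Fin n)) : K :=
  ∑ x ∈ Gᶜ, insertSign K x G * f (insert x G)

lemma finsetBoundary_sub (f g : Finset (Fin n) → K) :
    finsetBoundary (f - g) = finsetBoundary f - finsetBoundary g := by
  funext G
  simp [finsetBoundary, mul_sub, sum_sub_distrib]

lemma finsetBoundary_neg (f : Finset (Fin n) → K) :
    finsetBoundary (-f) = -finsetBoundary f := by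
  funext G
  simp [finsetBoundary]

/-- The cone `v * f` over the vertex `v`. -/
def join (v : Fin n) (f : Finset (Fin n) → K) (G : Finset (Fin n)) : K :=
  if v ∈ G then insertSign K v (G.erase v) * f (G.erase v) else 0

/-- `contract v f F` is the coefficient of `f` on the face `v * F`. -/
def contract (v : Fin n) (f : Finset (Fin n) → K) (F : Finset (Fin n)) : K :=
  if v ∈ F then 0 else insertSign K v F * f (insert v F)

variable {v : Fin n} {f g : Finset (Fin n) → K}

lemma join_ne_zero {G : Finset (Fin n)} (h : join v f G ≠ 0) : v ∈ G ∧ f (G.erase v) ≠ 0 := by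
  unfold join at h
  split_ifs at h with hvG
  · exact ⟨hvG, right_ne_zero_of_mul h⟩
  · exact absurd rfl h

lemma contract_ne_zero {F : Finset (Fin n)} (h : contract v f F ≠ 0) :
    v ∉ F ∧ f (insert v F) ≠ 0 := by
  unfold contract at h
  split_ifs at h with hvF
  · exact absurd rfl h
  · exact ⟨hvF, right_ne_zero_of_mul h⟩

lemma contract_sub : contract v (f - g) = contract v f - contract v g := by
  funext F
  by_cases hvF : v ∈ F <;> simp [contract, hvF, mul_sub]

lemma contract_join (hf : ∀ G, v ∈ G → f G = 0) : contract v (join v f) = f := by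
  funext F
  by_cases hvF : v ∈ F
  · simp [contract, hvF, hf F hvF]
  · simp [contract, join, hvF, erase_insert hvF, ← mul_assoc, insertSign_mul_self]

lemma contract_eq_zero (hf : ∀ G, v ∈ G → f G = 0) : contract v f = 0 := by
  funext F
  simp [contract, hf]

lemma finsetBoundary_join_of_notMem {G : Finset (Fin n)} (hvG : v ∉ G) :
    finsetBoundary (join v f) G = f G := by
  rw [finsetBoundary, sum_eq_single v]
  · simp [join, erase_insert hvG, ← mul_assoc, insertSign_mul_self]
  · intro x _ hxv
    simp [join, Ne.symm hxv, hvG]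
  · simp [hvG]

lemma contract_finsetBoundary :
    contract v (finsetBoundary f) = -finsetBoundary (contract v f) := by
  funext F
  by_cases hvF : v ∈ F
  · simp [contract, finsetBoundary, hvF]
  rw [Pi.neg_apply, finsetBoundary, ← sum_erase Fᶜ (a := v) (by simp [contract]), contract,
    if_neg hvF, finsetBoundary, compl_insert, mul_sum, ← sum_neg_distrib]
  refine sum_congr rfl fun x hx => ?_
  obtain ⟨hxv, hxF⟩ : x ≠ v ∧ x ∉ F := by simpa using hx
  have hvxF : v ∉ insert x F := by simp [Ne.symm hxv, hvF]
  rw [contract, if_neg hvxF, insert_comm x v F]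
  linear_combination f (insert v (insert x F)) * insertSign_insert_mul (K := K) hxv hvF hxF

end FinsetBoundary

section Cycles

variable {K : Type*} [CommRing K]

def faces (Δ : Set (Finset (Fin n))) (p : ℤ) : Set (Finset (Fin n)) :=
  {F | F ∈ Δ ∧ (F.card : ℤ) = p + 1}

def IsCycle (Δ : Set (Finset (Fin n))) (p : ℤ) (f : Finset (Fin n) → K) : Prop :=
  Function.support f ⊆ faces Δ p ∧ ∀ G ∈ faces Δ (p - 1), finsetBoundary f G = 0

def IsBoundary (Δ : Set (Finset (Fin n))) (p : ℤ) (f : Finset (Fin n) → K) : Prop :=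
  ∃ g : Finset (Fin n) → K, Function.support g ⊆ faces Δ (p + 1) ∧
    ∀ F ∈ faces Δ p, f F = finsetBoundary g F

lemma IsCycle.mono {Γ Δ : Set (Finset (Fin n))} {p : ℤ} {z : Finset (Fin n) → K}
    (hz : IsCycle Γ p z) (hΓ : IsComplex Γ) (hΓΔ : Γ ⊆ Δ) : IsCycle Δ p z := by
  refine ⟨hz.1.trans fun F hF => ⟨hΓΔ hF.1, hF.2⟩, fun G hG => ?_⟩
  by_cases hGΓ : G ∈ Γ
  · exact hz.2 G ⟨hGΓ, hG.2⟩
  refine sum_eq_zero fun x _ => ?_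
  have hzx : z (insert x G) = 0 := by
    by_contra hne
    exact hGΓ (hΓ _ (hz.1 hne).1 _ (subset_insert x G))
  rw [hzx, mul_zero]

lemma apply_eq_zero_of_support_subset_faces {Δ : Set (Finset (Fin n))} {p : ℤ}
    {f : Finset (Fin n) → K} {v : Fin n} (hf : Function.support f ⊆ faces Δ p)
    (hΔ : ∀ F ∈ Δ, v ∉ F) (G : Finset (Fin n)) (hvG : v ∈ G) : f G = 0 := by
  by_contra hne
  exact hΔ G (hf hne).1 hvG

end Cycles

section LinkDeletion

variable {K : Type*} [CommRing K] {E : Set (Finset (Fin n))} {v : Fin n} {p : ℤ}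

lemma mem_link_singleton {F : Finset (Fin n)} : F ∈ link E {v} ↔ v ∉ F ∧ insert v F ∈ E := by
  simp [link]

lemma mem_restrict_compl_singleton {F : Finset (Fin n)} :
    F ∈ restrict E {v}ᶜ ↔ F ∈ E ∧ v ∉ F := by
  simp [restrict]

lemma isComplex_link (hE : IsComplex E) (S : Finset (Fin n)) : IsComplex (link E S) :=
  fun _ hF _ hGF => ⟨hF.1.mono_left hGF, hE _ hF.2 _ (union_subset_union_left hGF)⟩

lemma link_singleton_subset_restrict (hE : IsComplex E) : link E {v} ⊆ restrict E {v}ᶜ := by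
  intro F hF
  rw [mem_link_singleton] at hF
  exact mem_restrict_compl_singleton.2 ⟨hE _ hF.2 _ (subset_insert v F), hF.1⟩

lemma support_join_subset {z : Finset (Fin n) → K}
    (hz : Function.support z ⊆ faces (link E {v}) p) :
    Function.support (join v z) ⊆ faces E (p + 1) := by
  intro G hG
  obtain ⟨hvG, hzG⟩ := join_ne_zero hG
  obtain ⟨hGE, hcard⟩ := hz hzG
  rw [mem_link_singleton, insert_erase hvG] at hGE
  refine ⟨hGE.2, ?_⟩
  rw [← insert_erase hvG, card_insert_of_notMem (notMem_erase v G)]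
  push_cast
  omega

lemma support_contract_subset {c : Finset (Fin n) → K}
    (hc : Function.support c ⊆ faces E (p + 1)) :
    Function.support (contract v c) ⊆ faces (link E {v}) p := by
  intro F hF
  obtain ⟨hvF, hcF⟩ := contract_ne_zero hF
  obtain ⟨hFE, hcard⟩ := hc hcF
  refine ⟨mem_link_singleton.2 ⟨hvF, hFE⟩, ?_⟩
  rw [card_insert_of_notMem hvF] at hcard
  push_cast at hcard
  omega

variable {z w : Finset (Fin n) → K}

lemma contract_join_sub {q : ℤ} (hz : Function.support z ⊆ faces (link E {v}) p)
    (hw : Function.support w ⊆ faces (restrict E {v}ᶜ) q) :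
    contract v (join v z - w) = z := by
  rw [contract_sub, contract_join, contract_eq_zero, sub_zero]
  · exact apply_eq_zero_of_support_subset_faces hw
      fun _ hF => (mem_restrict_compl_singleton.1 hF).2
  · exact apply_eq_zero_of_support_subset_faces hz fun _ hF => (mem_link_singleton.1 hF).1

lemma isCycle_join_sub (hz : IsCycle (link E {v}) p z)
    (hw : Function.support w ⊆ faces (restrict E {v}ᶜ) (p + 1))
    (hzw : ∀ F ∈ faces (restrict E {v}ᶜ) p, z F = finsetBoundary w F) :
    IsCycle E (p + 1) (join v z - w) := by
  have hwE : Function.support w ⊆ faces E (p + 1) := hw.trans fun F hF =>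
    ⟨(mem_restrict_compl_singleton.1 hF.1).1, hF.2⟩
  refine ⟨(Function.support_sub _ _).trans (Set.union_subset (support_join_subset hz.1) hwE),
    fun G ⟨hGE, hcard⟩ => ?_⟩
  by_cases hvG : v ∈ G
  · have hA : G.erase v ∈ faces (link E {v}) (p - 1) := by
      refine ⟨mem_link_singleton.2 ⟨notMem_erase v G, by rwa [insert_erase hvG]⟩, ?_⟩
      have := card_erase_add_one hvG
      omega
    have hcontract := congrFun (contract_finsetBoundary (v := v) (f := join v z - w)) (G.erase v)
    rw [contract_join_sub hz.1 hw, Pi.neg_apply, hz.2 _ hA, neg_zero, contract,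
      if_neg (notMem_erase v G), insert_erase hvG] at hcontract
    linear_combination insertSign K v (G.erase v) * hcontract -
      finsetBoundary (join v z - w) G * insertSign_mul_self (K := K) v (G.erase v)
  · rw [finsetBoundary_sub, Pi.sub_apply, finsetBoundary_join_of_notMem hvG,
      ← hzw G ⟨mem_restrict_compl_singleton.2 ⟨hGE, hvG⟩, by omega⟩, sub_self]

lemma not_isBoundary_join_sub (hz : Function.support z ⊆ faces (link E {v}) p)
    (hw : Function.support w ⊆ faces (restrict E {v}ᶜ) (p + 1))
    (hzb : ¬ IsBoundary (link E {v}) p z) : ¬ IsBoundary E (p + 1) (join v z - w) := by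
  rintro ⟨c, hc, hcu⟩
  refine hzb ⟨-contract v c, by simpa using support_contract_subset hc, fun F ⟨hFL, hcard⟩ => ?_⟩
  rw [mem_link_singleton] at hFL
  have hvF : insert v F ∈ faces E (p + 1) :=
    ⟨hFL.2, by rw [card_insert_of_notMem hFL.1]; push_cast; omega⟩
  calc z F = contract v (join v z - w) F := by rw [contract_join_sub hz hw]
    _ = contract v (finsetBoundary c) F := by simp only [contract, if_neg hFL.1, hcu _ hvF]
    _ = finsetBoundary (-contract v c) F := by rw [contract_finsetBoundary, finsetBoundary_neg]

end LinkDeletion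

section Homology

variable {k} {Δ : Set (Finset (Fin n))} {p : ℤ}

open Classical in
noncomputable def Chains.extendByZero (c : Chains k Δ p) (F : Finset (Fin n)) : k :=
  if h : F ∈ Δ ∧ (F.card : ℤ) = p + 1 then c ⟨F, h⟩ else 0

lemma Chains.extendByZero_apply (c : Chains k Δ p) (F : {F // F ∈ Δ ∧ (F.card : ℤ) = p + 1}) :
    c.extendByZero F.1 = c F :=
  dif_pos F.2

lemma Chains.support_extendByZero (c : Chains k Δ p) :
    Function.support c.extendByZero ⊆ faces Δ p :=
  fun _ hF => by_contra fun h => hF (dif_neg h)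

lemma Chains.extendByZero_restrict {f : Finset (Fin n) → k}
    (hf : Function.support f ⊆ faces Δ p) :
    Chains.extendByZero (fun F => f F.1 : Chains k Δ p) = f := by
  funext F
  by_cases hF : F ∈ faces Δ p
  · exact dif_pos hF
  · exact (dif_neg hF).trans (Function.notMem_support.1 fun h => hF (hf h)).symm

lemma boundary_apply (c : Chains k Δ p) (G : {G // G ∈ Δ ∧ (G.card : ℤ) = p - 1 + 1}) :
    boundary k Δ p c G = finsetBoundary c.extendByZero G.1 := by
  show boundaryFun k Δ p c G = _
  rw [boundaryFun, finsetBoundary, ← sum_subset (subset_univ G.1ᶜ)]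
  · refine sum_congr rfl fun x hx => ?_
    rw [mem_compl] at hx
    by_cases hxG : insert x G.1 ∈ Δ
    · rw [dif_pos ⟨hx, hxG⟩]
      exact congrArg _ (c.extendByZero_apply _).symm
    · rw [dif_neg fun h => hxG h.2, Chains.extendByZero, dif_neg fun h => hxG h.1, mul_zero]
  · intro x _ hx
    exact dif_neg fun h => hx (mem_compl.2 h.1)

lemma chainsCongr_apply {q : ℤ} (h : p = q) (c : Chains k Δ p)
    (F : {F // F ∈ Δ ∧ (F.card : ℤ) = q + 1}) :
    chainsCongr k Δ h c F = c ⟨F.1, F.2.1, h ▸ F.2.2⟩ := by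
  subst h
  rfl

lemma not_subsingleton_reducedHomology_iff_exists_chain :
    ¬ Subsingleton (ReducedHomology k Δ p) ↔
      ∃ c ∈ cycles k Δ p, c ∉ boundaries k Δ p := by
  rw [Submodule.Quotient.subsingleton_iff, Submodule.eq_top_iff']
  push Not
  exact ⟨fun ⟨⟨c, hc⟩, hcb⟩ => ⟨c, hc, hcb⟩, fun ⟨c, hc, hcb⟩ => ⟨⟨c, hc⟩, hcb⟩⟩

theorem not_subsingleton_reducedHomology_iff :
    ¬ Subsingleton (ReducedHomology k Δ p) ↔
      ∃ f : Finset (Fin n) → k, IsCycle Δ p f ∧ ¬ IsBoundary Δ p f := by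
  rw [not_subsingleton_reducedHomology_iff_exists_chain]
  constructor
  · rintro ⟨c, hc, hcb⟩
    refine ⟨c.extendByZero, ⟨c.support_extendByZero, fun G hG => ?_⟩, ?_⟩
    · rw [← boundary_apply c ⟨G, hG⟩, LinearMap.mem_ker.1 hc, Pi.zero_apply]
    · rintro ⟨g, hg, hcg⟩
      refine hcb (LinearMap.mem_range.2 ⟨fun F => g F.1, funext fun F => ?_⟩)
      rw [LinearMap.comp_apply, LinearEquiv.coe_coe, chainsCongr_apply, boundary_apply,
        Chains.extendByZero_restrict hg, ← hcg _ F.2, Chains.extendByZero_apply]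
  · rintro ⟨f, hf, hfb⟩
    refine ⟨fun F => f F.1, LinearMap.mem_ker.2 (funext fun G => ?_), fun hd => ?_⟩
    · rw [boundary_apply, Chains.extendByZero_restrict hf.1]
      exact hf.2 _ G.2
    · obtain ⟨d, hd⟩ := LinearMap.mem_range.1 hd
      refine hfb ⟨d.extendByZero, d.support_extendByZero, fun F hF => ?_⟩
      have hdF := congrFun hd ⟨F, hF⟩
      rw [LinearMap.comp_apply, LinearEquiv.coe_coe, chainsCongr_apply, boundary_apply] at hdF
      exact hdF.symm

theorem not_subsingleton_restrict_or_of_link (hΔ : IsComplex Δ) {v : Fin n}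
    (h : ¬ Subsingleton (ReducedHomology k (link Δ {v}) p)) :
    ¬ Subsingleton (ReducedHomology k (restrict Δ {v}ᶜ) p) ∨
      ¬ Subsingleton (ReducedHomology k Δ (p + 1)) := by
  simp only [not_subsingleton_reducedHomology_iff] at h ⊢
  obtain ⟨z, hz, hzb⟩ := h
  by_cases hzD : IsBoundary (restrict Δ {v}ᶜ) p z
  · obtain ⟨w, hw, hzw⟩ := hzD
    exact Or.inr ⟨join v z - w, isCycle_join_sub hz hw hzw, not_isBoundary_join_sub hz.1 hw hzb⟩
  · exact Or.inl ⟨z, hz.mono (isComplex_link hΔ {v}) (link_singleton_subset_restrict hΔ), hzD⟩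

end Homology

section Sub

variable {k} {Δ : Set (Finset (Fin n))} {R S : Finset (Fin n)} {v : Fin n}

lemma isComplex_sub (hΔ : IsComplex Δ) (R S : Finset (Fin n)) : IsComplex (sub Δ R S) :=
  fun _ hF _ hGF => ⟨hGF.trans hF.1, hΔ _ hF.2 _ (union_subset_union_left hGF)⟩

lemma link_sub_insert (hvR : v ∉ R) : link (sub Δ (insert v R) S) {v} = sub Δ R (insert v S) := by
  ext F
  simp only [mem_link_singleton, sub, Set.mem_ofPred_eq, insert_subset_iff, mem_insert_self,
    true_and, insert_union, union_insert]
  constructor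
  · rintro ⟨hvF, hFR, hFS⟩
    exact ⟨(subset_insert_iff_of_notMem hvF).1 hFR, hFS⟩
  · rintro ⟨hFR, hFS⟩
    exact ⟨fun hvF => hvR (hFR hvF), hFR.trans (subset_insert v R), hFS⟩

lemma restrict_sub_insert (hvR : v ∉ R) : restrict (sub Δ (insert v R) S) {v}ᶜ = sub Δ R S := by
  ext F
  simp only [mem_restrict_compl_singleton, sub, Set.mem_ofPred_eq]
  constructor
  · rintro ⟨⟨hFR, hFS⟩, hvF⟩
    exact ⟨(subset_insert_iff_of_notMem hvF).1 hFR, hFS⟩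
  · rintro ⟨hFR, hFS⟩
    exact ⟨⟨hFR.trans (subset_insert v R), hFS⟩, fun hvF => hvR (hFR hvF)⟩

theorem exists_not_subsingleton_sub_union (hΔ : IsComplex Δ) (U : Finset (Fin n)) (p : ℤ)
    (hRU : Disjoint R U) (h : ¬ Subsingleton (ReducedHomology k (sub Δ R (U ∪ S)) p)) :
    ∃ A ⊆ U, ¬ Subsingleton (ReducedHomology k (sub Δ (R ∪ A) S) (p + A.card)) := by
  induction U using Finset.induction_on generalizing R p with
  | empty => exact ⟨∅, empty_subset _, by simpa using h⟩
  | insert v U hvU ih =>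
    have hvR : v ∉ R := disjoint_right.1 hRU (mem_insert_self v U)
    have hRU' : Disjoint R U := hRU.mono_right (subset_insert v U)
    rw [insert_union, ← link_sub_insert hvR] at h
    rcases not_subsingleton_restrict_or_of_link (isComplex_sub hΔ _ _) h with h | h
    · rw [restrict_sub_insert hvR] at h
      obtain ⟨A, hAU, hA⟩ := ih p hRU' h
      exact ⟨A, hAU.trans (subset_insert v U), hA⟩
    · obtain ⟨A, hAU, hA⟩ := ih (p + 1) (disjoint_insert_left.2 ⟨hvU, hRU'⟩) h
      refine ⟨insert v A, insert_subset_insert v hAU, ?_⟩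
      rw [union_insert, ← insert_union, card_insert_of_notMem fun hvA => hvU (hAU hvA)]
      push_cast
      rwa [← add_assoc, add_right_comm]

end Sub

theorem stmt8_general (k : Type) [Field k] {n : ℕ} (Δ : Set (Finset (Fin n)))
    (hΔ : IsComplex Δ) (R S T : Finset (Fin n))
    (hRS : Disjoint R S) (hRT : Disjoint R T) (hST : Disjoint S T)
    (hcov : R ∪ S ∪ T = Finset.univ) (p : ℤ)
    (h : ¬ Subsingleton (ReducedHomology k (sub Δ R S) p))
    (S' : Finset (Fin n)) (hS' : S' ⊆ S) :
    ∃ R' T' : Finset (Fin n), R ⊆ R' ∧ T ⊆ T' ∧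
      Disjoint R' S' ∧ Disjoint R' T' ∧ Disjoint S' T' ∧
      R' ∪ S' ∪ T' = Finset.univ ∧
      ¬ Subsingleton (ReducedHomology k (sub Δ R' S')
        (p + ((R' \ R).card : ℤ))) := by
  rw [← sdiff_union_of_subset hS'] at h
  obtain ⟨A, hA, hH⟩ := exists_not_subsingleton_sub_union hΔ (S \ S') p
    (hRS.mono_right sdiff_subset) h
  have hRA : Disjoint R A := hRS.mono_right (hA.trans sdiff_subset)
  refine ⟨R ∪ A, T ∪ (S \ (S' ∪ A)), subset_union_left, subset_union_left, ?_, ?_, ?_, ?_,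
    by rwa [union_sdiff_cancel_left hRA]⟩
  all_goals
    simp only [disjoint_left, subset_iff, eq_univ_iff_forall, mem_union, mem_sdiff]
      at hRS hRT hST hcov hA ⊢
    grind

/-- reducing `S`: nonvanishing of `H̃_p(Δ_R^{S,T})` propagates to a
partition with prescribed smaller `S'`, with degree shift `p' - p = |R' \ R|`. -/
theorem stmt8 (k : Type) [Field k] {n : ℕ} (Δ : Set (Finset (Fin n)))
    (hΔ : IsComplex Δ) (R S T : Finset (Fin n))
    (hRS : Disjoint R S) (hRT : Disjoint R T) (hST : Disjoint S T)
    (hcov : R ∪ S ∪ T = Finset.univ) (hS : S.Nonempty) (p : ℤ)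
    (h : ¬ Subsingleton (ReducedHomology k (sub Δ R S) p))
    (S' : Finset (Fin n)) (hS' : S' ⊆ S) :
    ∃ R' T' : Finset (Fin n), R ⊆ R' ∧ T ⊆ T' ∧
      Disjoint R' S' ∧ Disjoint R' T' ∧ Disjoint S' T' ∧
      R' ∪ S' ∪ T' = Finset.univ ∧
      ¬ Subsingleton (ReducedHomology k (sub Δ R' S')
        (p + ((R' \ R).card : ℤ))) :=
  stmt8_general k Δ hΔ R S T hRS hRT hST hcov p h S' hS'

end SCx
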